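/- arXiv:0712.3688 — 2 statements merged into one kernel-verified Lean document; each statement's English description precedes it below -/
import Mathlib

section
/- For nonempty compact metric spaces (X,d), (X',d') with Borel probability measures μ, μ', the Gromov–Hausdorff–Prokhorov distance admits the characterization: d_GHP((X,d,μ),(X',d',μ')) = inf{ε > 0 : there exist a coupling ν of μ and μ' and a compact correspondence ℛ between X and X' such that ν(ℛ) ≥ 1 − ε and (1/2)·dis ℛ ≤ ε}. -/
open MeasureTheory Set

section GHP

variable {X Y : Type*}

/-- A "glue metric": a metric on the disjoint union `X ⊕ Y` whose restrictions to `X`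
and `Y` coincide with the given metrics. -/
structure IsGlueMetric [MetricSpace X] [MetricSpace Y] (δ : X ⊕ Y → X ⊕ Y → ℝ) : Prop where
  refl : ∀ a, δ a a = 0
  pos : ∀ a b, a ≠ b → 0 < δ a b
  symm : ∀ a b, δ a b = δ b a
  triangle : ∀ a b c, δ a c ≤ δ a b + δ b c
  restr_left : ∀ x x' : X, δ (Sum.inl x) (Sum.inl x') = dist x x'
  restr_right : ∀ y y' : Y, δ (Sum.inr y) (Sum.inr y') = dist y y'

/-- The Hausdorff distance, in `(X ⊕ Y, δ)`, between (the images of) `X` and `Y`: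
the infimum of `ε > 0` such that each space is contained in the open `ε`-neighborhood
of the other. -/
noncomputable def glueHausdorffDist (δ : X ⊕ Y → X ⊕ Y → ℝ) : ℝ :=
  sInf {ε : ℝ | 0 < ε ∧ (∀ x : X, ∃ y : Y, δ (Sum.inl x) (Sum.inr y) < ε) ∧
    (∀ y : Y, ∃ x : X, δ (Sum.inl x) (Sum.inr y) < ε)}

/-- The Prokhorov distance, in `(X ⊕ Y, δ)`, between the pushforwards of `μ` and `ν`:
the infimum of `ε > 0` such that `μ(C) ≤ ν(C^ε) + ε` for every `δ`-closed set `C`,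
where `C^ε` is the open `ε`-neighborhood for `δ`. -/
noncomputable def glueProkhorovDist [MeasurableSpace X] [MeasurableSpace Y]
    (δ : X ⊕ Y → X ⊕ Y → ℝ) (μ : Measure X) (ν : Measure Y) : ℝ :=
  sInf {ε : ℝ | 0 < ε ∧ ∀ C : Set (X ⊕ Y),
    (∀ a ∉ C, ∃ η > 0, ∀ b ∈ C, η ≤ δ a b) →
    μ (Sum.inl ⁻¹' C) ≤ ν (Sum.inr ⁻¹' {a | ∃ b ∈ C, δ a b < ε}) + ENNReal.ofReal ε}

/-- The Gromov–Hausdorff–Prokhorov distance between two metric spaces equipped with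
Borel measures: the infimum, over all metrics `δ` on the disjoint union restricting to
the given metrics, of the maximum of the Hausdorff distance between the two spaces and
the Prokhorov distance between the pushforward measures. -/
noncomputable def ghpDist [MetricSpace X] [MetricSpace Y]
    [MeasurableSpace X] [MeasurableSpace Y] (μ : Measure X) (ν : Measure Y) : ℝ :=
  sInf {r : ℝ | ∃ δ : X ⊕ Y → X ⊕ Y → ℝ, IsGlueMetric δ ∧
    r = max (glueHausdorffDist δ) (glueProkhorovDist δ μ ν)}

end GHP

section Corr

variable {X Y : Type*}

/-- A correspondence between `X` and `Y`: a relation whose projections to both factors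
are surjective. -/
def IsCorrespondence (R : Set (X × Y)) : Prop :=
  (∀ x : X, ∃ y : Y, (x, y) ∈ R) ∧ (∀ y : Y, ∃ x : X, (x, y) ∈ R)

/-- The distortion of a correspondence. -/
noncomputable def distortion [MetricSpace X] [MetricSpace Y] (R : Set (X × Y)) : ℝ :=
  sSup {r : ℝ | ∃ p ∈ R, ∃ q ∈ R, r = |dist p.1 q.1 - dist p.2 q.2|}

/-- A coupling of `μ` and `μ'`: a measure on the product with the given marginals. -/
def IsCoupling [MeasurableSpace X] [MeasurableSpace Y]
    (ν : Measure (X × Y)) (μ : Measure X) (μ' : Measure Y) : Prop :=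
  Measure.map Prod.fst ν = μ ∧ Measure.map Prod.snd ν = μ'

end Corr

/-!
A correspondence `R` of distortion at most `2ε` is exactly what is needed to glue `X` and `Y`
into one metric space in which `x` and `y` are at distance `ε` whenever `(x, y) ∈ R`; a coupling
putting mass `1 - ε` on `R` then bounds the Prokhorov distance by `ε`.

Conversely, given a glue metric with Hausdorff and Prokhorov distances below `r`, partition both
spaces into cells of diameter `< 2θ`. The Prokhorov inequality applied to unions of cells is a Hall
condition, with defect `r`, for transporting the cell masses of `μ` to those of `μ'` along pairs
of cells at distance about `r`. Hall's marriage theorem (after scaling and rounding) yields a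
transport plan of mass almost `1 - r`; spreading it over the cells and completing it by a product
measure gives a coupling concentrated, up to mass `r + θ`, on the compact correspondence
`{(x, y) | δ x y ≤ r + 4θ}`, whose distortion is at most twice that.
-/

open scoped ENNReal

section Infimum

variable {α : Type*} [ConditionallyCompleteLinearOrder α]

theorem mem_of_csInf_lt {S : Set α} {r : α} (h : sInf S < r) (hS : S.Nonempty)
    (hmono : ∀ a ∈ S, ∀ b, a ≤ b → b ∈ S) : r ∈ S :=
  let ⟨a, ha, har⟩ := exists_lt_of_csInf_lt hS h
  hmono a ha r har.le

variable [DenselyOrdered α] [NoMaxOrder α]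

theorem csInf_le_of_Ioi_subset {S : Set α} {a : α} (hS : Ioi a ⊆ S) (hb : BddBelow S) :
    sInf S ≤ a :=
  (csInf_le_csInf hb nonempty_Ioi hS).trans_eq csInf_Ioi

theorem csInf_eq_csInf_of_forall_exists_le_of_Ioi_subset {S T : Set α} (hT : T.Nonempty)
    (hS : BddBelow S) (hT' : BddBelow T) (h₁ : ∀ b ∈ T, ∃ a ∈ S, a ≤ b)
    (h₂ : ∀ a ∈ S, Ioi a ⊆ T) :
    sInf S = sInf T := by
  obtain ⟨b, hb⟩ := hT
  obtain ⟨a, ha, -⟩ := h₁ b hb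
  refine le_antisymm (le_csInf ⟨b, hb⟩ fun b hb => ?_) (le_csInf ⟨a, ha⟩ fun a ha => ?_)
  · obtain ⟨a, ha, hab⟩ := h₁ b hb
    exact (csInf_le hS ha).trans hab
  · exact csInf_le_of_Ioi_subset (h₂ a ha) hT'

end Infimum

section Transport

open Finset

variable {I J : Type*}

open Classical in
noncomputable def relImageFinset [Fintype J] (S : I → J → Prop) (A : Finset I) : Finset J :=
  {j | ∃ i ∈ A, S i j}

theorem mem_relImageFinset [Fintype J] {S : I → J → Prop} {A : Finset I} {j : J} :
    j ∈ relImageFinset S A ↔ ∃ i ∈ A, S i j := by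
  classical
  simp [relImageFinset]

theorem card_filter_sigma_fst_eq {p : I → ℕ} [Fintype I] [DecidableEq I] (i : I) :
    #{x : Σ i, Fin (p i) | x.1 = i} = p i := by
  have : ({x : Σ i, Fin (p i) | x.1 = i} : Finset _) = ({i} : Finset I).sigma fun _ => univ := by
    ext ⟨j, k⟩
    simp
  simp [this]

variable [Fintype I] [Fintype J]

theorem exists_nat_transport_of_hall (p : I → ℕ) (q : J → ℕ) (S : I → J → Prop)
    (h : ∀ A : Finset I, ∑ i ∈ A, p i ≤ ∑ j ∈ relImageFinset S A, q j) :
    ∃ m : I → J → ℕ, (∀ i, ∑ j, m i j = p i) ∧ (∀ j, ∑ i, m i j ≤ q j) ∧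
      ∀ i j, m i j ≠ 0 → S i j := by
  classical
  -- Hall's theorem for the graph in which `i` and `j` are replaced by `p i`, resp. `q j`, copies.
  let t : (Σ i, Fin (p i)) → Finset (Σ j, Fin (q j)) := fun x => {c | S x.1 c.1}
  have hall : ∀ s, #s ≤ #(s.biUnion t) := by
    intro s
    have hs : s ⊆ (s.image Sigma.fst).sigma fun _ => univ := fun x hx => by
      simpa using ⟨x.2, hx⟩
    have hts : s.biUnion t = (relImageFinset S (s.image Sigma.fst)).sigma fun _ => univ := by
      ext c
      simp [t, mem_relImageFinset, and_comm]
    calc #s ≤ ∑ i ∈ s.image Sigma.fst, p i := by simpa using Finset.card_le_card hs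
      _ ≤ ∑ j ∈ relImageFinset S (s.image Sigma.fst), q j := h _
      _ = #(s.biUnion t) := by simp [hts]
  obtain ⟨f, hf_inj, hf_mem⟩ := (all_card_le_biUnion_card_iff_exists_injective t).mp hall
  refine ⟨fun i j => #{x | x.1 = i ∧ (f x).1 = j}, fun i => ?_, fun j => ?_, fun i j hm => ?_⟩
  · rw [← card_filter_sigma_fst_eq (p := p) i, card_eq_sum_card_fiberwise (f := fun x => (f x).1)
      (t := univ) fun _ _ => Finset.mem_univ _]
    simp only [filter_filter]
  · calc ∑ i, #{x | x.1 = i ∧ (f x).1 = j} = #{x | (f x).1 = j} := by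
          rw [card_eq_sum_card_fiberwise (f := Sigma.fst) (t := univ) fun _ _ => Finset.mem_univ _]
          simp only [filter_filter, and_comm]
      _ ≤ #{c : Σ j, Fin (q j) | c.1 = j} :=
          card_le_card_of_injOn f (fun x hx => by simpa using hx) hf_inj.injOn
      _ = q j := card_filter_sigma_fst_eq j
  · obtain ⟨x, hx⟩ := card_ne_zero.mp hm
    obtain ⟨rfl, rfl⟩ := (Finset.mem_filter.mp hx).2
    simpa [t] using hf_mem x

theorem sum_relImageFinset_option (S : I → J → Prop) {A : Finset I} (hA : A.Nonempty)
    (Q : Option J → ℝ) :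
    ∑ oj ∈ relImageFinset (fun i oj => oj.elim True (S i)) A, Q oj =
      Q none + ∑ j ∈ relImageFinset S A, Q (some j) := by
  classical
  obtain ⟨i, hi⟩ := hA
  rw [relImageFinset, relImageFinset, sum_filter, sum_filter, Fintype.sum_option]
  simp only [Option.elim, and_true, if_pos (⟨i, hi⟩ : ∃ i, i ∈ A)]
  congr

theorem sum_floor_le_sum_relImageFinset_option {p : I → ℝ} {q : J → ℝ} (hp : ∀ i, 0 ≤ p i)
    {S : I → J → Prop} {α : ℝ}
    (h : ∀ A : Finset I, ∑ i ∈ A, p i ≤ ∑ j ∈ relImageFinset S A, q j + α) (N : ℕ)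
    (A : Finset I) :
    ∑ i ∈ A, ⌊N * p i⌋₊ ≤ ∑ oj ∈ relImageFinset (fun i (oj : Option J) => oj.elim True (S i)) A,
      oj.elim (⌈N * α⌉₊ + Fintype.card J) fun j => ⌊N * q j⌋₊ := by
  rcases A.eq_empty_or_nonempty with rfl | hA
  · simp
  rw [← Nat.cast_le (α := ℝ), Nat.cast_sum, Nat.cast_sum, sum_relImageFinset_option S hA]
  have hcard : (#(relImageFinset S A) : ℝ) ≤ Fintype.card J := by
    exact_mod_cast card_le_univ _
  calc ∑ i ∈ A, (⌊N * p i⌋₊ : ℝ) ≤ N * ∑ i ∈ A, p i := by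
        rw [mul_sum]
        exact sum_le_sum fun i _ => Nat.floor_le (by have := hp i; positivity)
    _ ≤ N * (∑ j ∈ relImageFinset S A, q j + α) := by gcongr; exact h A
    _ ≤ ∑ j ∈ relImageFinset S A, ((⌊N * q j⌋₊ : ℝ) + 1) + (⌈N * α⌉₊ : ℝ) := by
        rw [mul_add, mul_sum]
        gcongr with j
        · exact (Nat.lt_floor_add_one _).le
        · exact Nat.le_ceil _
    _ ≤ _ := by
        simp only [sum_add_distrib, sum_const, nsmul_one, Option.elim, Nat.cast_add]
        linarith

/-- Approximate transport in the presence of a Hall defect `α`: scale by `N`, round down, and let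
an extra target of capacity `⌈N α⌉ + |J|` absorb the defect and the rounding errors. -/
theorem exists_transport_of_hall_defect (p : I → ℝ) (q : J → ℝ) (hp : ∀ i, 0 ≤ p i)
    (hq : ∀ j, 0 ≤ q j) (S : I → J → Prop) {α : ℝ}
    (h : ∀ A : Finset I, ∑ i ∈ A, p i ≤ ∑ j ∈ relImageFinset S A, q j + α) {ε : ℝ} (hε : 0 < ε) :
    ∃ m : I → J → ℝ, (∀ i j, 0 ≤ m i j) ∧ (∀ i, ∑ j, m i j ≤ p i) ∧
      (∀ j, ∑ i, m i j ≤ q j) ∧ (∀ i j, m i j ≠ 0 → S i j) ∧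
      ∑ i, p i ≤ ∑ i, ∑ j, m i j + α + ε := by
  classical
  have hα : 0 ≤ α := by simpa [relImageFinset] using h ∅
  set c : ℝ := Fintype.card I + Fintype.card J + 1
  obtain ⟨N, hN⟩ := exists_nat_gt (c / ε)
  have hN0 : (0 : ℝ) < N := (div_pos (by positivity) hε).trans hN
  have hcN : c ≤ ε * N := by rw [div_lt_iff₀ hε, mul_comm] at hN; exact hN.le
  let P : I → ℕ := fun i => ⌊N * p i⌋₊
  let Q : Option J → ℕ := fun oj => oj.elim (⌈N * α⌉₊ + Fintype.card J) fun j => ⌊N * q j⌋₊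
  have hP_le i : (P i : ℝ) ≤ N * p i := Nat.floor_le (by have := hp i; positivity)
  have hP_ge i : N * p i - 1 ≤ P i := by linarith [Nat.lt_floor_add_one ((N : ℝ) * p i)]
  have hQ_le j : (Q (some j) : ℝ) ≤ N * q j := Nat.floor_le (by have := hq j; positivity)
  have hQ_none : (Q none : ℝ) ≤ N * α + 1 + Fintype.card J := by
    have := Nat.ceil_lt_add_one (by positivity : (0 : ℝ) ≤ N * α)
    simp only [Q, Option.elim, Nat.cast_add]
    linarith
  obtain ⟨n, hrow, hcol, hsupp⟩ :=
    exists_nat_transport_of_hall P Q _ (sum_floor_le_sum_relImageFinset_option hp h N)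
  have hrow' i : (n i none : ℝ) + ∑ j, (n i (some j) : ℝ) = P i := by
    exact_mod_cast (Fintype.sum_option (n i)).symm.trans (hrow i)
  refine ⟨fun i j => n i (some j) / N, fun i j => by positivity, fun i => ?_, fun j => ?_,
    fun i j hm => hsupp i (some j) fun h0 => hm (by simp [h0]), ?_⟩
  · rw [← sum_div, div_le_iff₀ hN0, mul_comm]
    linarith [hP_le i, hrow' i, (n i none).cast_nonneg (α := ℝ)]
  · rw [← sum_div, div_le_iff₀ hN0, mul_comm]
    exact le_trans (by exact_mod_cast hcol (some j)) (hQ_le j)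
  · have hnone : ∑ i, (n i none : ℝ) ≤ Q none := by exact_mod_cast hcol none
    have htotal : N * ∑ i, p i - Fintype.card I - (N * α + 1 + Fintype.card J) ≤
        ∑ i, ∑ j, (n i (some j) : ℝ) := by
      have := sum_le_sum fun i (_ : i ∈ Finset.univ) => hP_ge i
      simp only [sum_sub_distrib, sum_const, card_univ, nsmul_one, ← mul_sum] at this
      simp only [← hrow', sum_add_distrib] at this ⊢
      linarith
    simp only [← sum_div]
    rw [← sub_le_iff_le_add, ← sub_le_iff_le_add, le_div_iff₀ hN0]
    nlinarith

end Transport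

open Function Metric in
theorem exists_measurable_partition_subset_ball {Z : Type*} [MetricSpace Z] [CompactSpace Z]
    [MeasurableSpace Z] [OpensMeasurableSpace Z] {θ : ℝ} (hθ : 0 < θ) :
    ∃ (n : ℕ) (z : Fin n → Z) (A : Fin n → Set Z), (∀ i, MeasurableSet (A i)) ∧
      (∀ i, A i ⊆ ball (z i) θ) ∧ Pairwise (Disjoint on A) ∧ ⋃ i, A i = univ := by
  obtain ⟨s, -, hs, hcover⟩ := finite_cover_balls_of_compact (isCompact_univ (X := Z)) hθ
  obtain ⟨n, z, rfl⟩ := hs.fin_embedding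
  refine ⟨n, z, disjointed fun i => ball (z i) θ, fun i => ?_, disjointed_subset _,
    disjoint_disjointed _, ?_⟩
  · exact disjointedRec (fun t i ht => ht.diff measurableSet_ball) measurableSet_ball
  · rw [iUnion_disjointed]
    simpa [eq_univ_iff_forall] using hcover

section Coupling

open ProbabilityTheory Function

variable {X Y ι κ : Type*} [MeasurableSpace X] [MeasurableSpace Y] [Fintype ι] [Fintype κ]

theorem map_fst_sum_smul_prod_le (w : ι → κ → ℝ≥0∞) (P : ι → Measure X) (Q : κ → Measure Y)
    [∀ j, IsZeroOrProbabilityMeasure (Q j)] :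
    (∑ i, ∑ j, w i j • (P i).prod (Q j)).map Prod.fst ≤ ∑ i, (∑ j, w i j) • P i := by
  simp only [Measure.map_finset_sum' measurable_fst.aemeasurable, Measure.map_smul,
    Measure.map_fst_prod, smul_smul, Finset.sum_smul]
  gcongr with i _ j _
  exact mul_le_of_le_one_right' prob_le_one

theorem sum_smul_cond_le (μ : Measure X) [IsFiniteMeasure μ] {A : ι → Set X}
    (hA : ∀ i, MeasurableSet (A i)) (hAd : Pairwise (Disjoint on A)) {w : ι → ℝ≥0∞}
    (hw : ∀ i, w i ≤ μ (A i)) : ∑ i, w i • μ[|A i] ≤ μ := by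
  refine Measure.le_iff.mpr fun s hs => ?_
  calc (∑ i, w i • μ[|A i]) s ≤ ∑ i, μ[s|A i] * μ (A i) := by
        simp only [Measure.coe_finsetSum, Finset.sum_apply, Measure.smul_apply, smul_eq_mul,
          mul_comm (w _)]
        gcongr with i
        exact hw i
    _ = μ (⋃ i, A i ∩ s) := by
        simp only [cond_mul_eq_inter (hA _)]
        rw [measure_iUnion (fun i j h => (hAd h).mono inter_subset_left inter_subset_left)
          fun i => (hA i).inter hs, tsum_fintype]
    _ ≤ μ s := measure_mono (Set.iUnion_subset fun _ => Set.inter_subset_right)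

theorem map_swap_sum_smul_prod (w : ι → κ → ℝ≥0∞) (P : ι → Measure X) (Q : κ → Measure Y)
    [∀ i, SFinite (P i)] [∀ j, SFinite (Q j)] :
    (∑ i, ∑ j, w i j • (P i).prod (Q j)).map Prod.swap = ∑ j, ∑ i, w i j • (Q j).prod (P i) := by
  simp only [Measure.map_finset_sum' measurable_swap.aemeasurable, Measure.map_smul,
    Measure.prod_swap]
  exact Finset.sum_comm

theorem exists_subcoupling_of_transport (μ : Measure X) (μ' : Measure Y) [IsFiniteMeasure μ]
    [IsFiniteMeasure μ'] {A : ι → Set X} {B : κ → Set Y} (hA : ∀ i, MeasurableSet (A i))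
    (hB : ∀ j, MeasurableSet (B j)) (hAd : Pairwise (Disjoint on A))
    (hBd : Pairwise (Disjoint on B)) (w : ι → κ → ℝ≥0∞) (hrow : ∀ i, ∑ j, w i j ≤ μ (A i))
    (hcol : ∀ j, ∑ i, w i j ≤ μ' (B j)) {R : Set (X × Y)}
    (hR : ∀ i j, w i j ≠ 0 → A i ×ˢ B j ⊆ R) :
    ∃ ρ : Measure (X × Y), ρ.map Prod.fst ≤ μ ∧ ρ.map Prod.snd ≤ μ' ∧
      ∑ i, ∑ j, w i j ≤ ρ R := by
  refine ⟨∑ i, ∑ j, w i j • (μ[|A i]).prod (μ'[|B j]), ?_, ?_, ?_⟩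
  · exact (map_fst_sum_smul_prod_le _ _ _).trans (sum_smul_cond_le μ hA hAd hrow)
  · rw [show (Prod.snd : X × Y → Y) = Prod.fst ∘ Prod.swap from rfl,
      ← Measure.map_map measurable_fst measurable_swap, map_swap_sum_smul_prod]
    exact (map_fst_sum_smul_prod_le _ _ _).trans (sum_smul_cond_le μ' hB hBd hcol)
  · simp only [Measure.coe_finsetSum, Finset.sum_apply, Measure.smul_apply, smul_eq_mul]
    gcongr with i _ j _
    by_cases hw : w i j = 0
    · simp [hw]
    have hμA : w i j ≤ μ (A i) :=
      (Finset.single_le_sum (by simp) (Finset.mem_univ j)).trans (hrow i)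
    have hμB : w i j ≤ μ' (B j) :=
      (Finset.single_le_sum (by simp) (Finset.mem_univ i)).trans (hcol j)
    calc w i j = w i j * ((μ[|A i]).prod (μ'[|B j])) (A i ×ˢ B j) := by
          rw [Measure.prod_prod, cond_apply_self (ne_bot_of_le_ne_bot hw hμA) (measure_ne_top _ _),
            cond_apply_self (ne_bot_of_le_ne_bot hw hμB) (measure_ne_top _ _), mul_one, mul_one]
      _ ≤ _ := by gcongr; exact hR i j hw

theorem inv_measure_univ_smul_smul (m : Measure X) [IsFiniteMeasure m] :
    (m univ)⁻¹ • m univ • m = m := by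
  rcases eq_or_ne (m univ) 0 with h | h
  · simp [Measure.measure_univ_eq_zero.mp h]
  · rw [smul_smul, ENNReal.inv_mul_cancel h (measure_ne_top _ _), one_smul]

theorem exists_isCoupling_ge (μ : Measure X) (μ' : Measure Y) [IsFiniteMeasure μ]
    [IsFiniteMeasure μ'] (hmass : μ univ = μ' univ) {ρ : Measure (X × Y)}
    (h₁ : ρ.map Prod.fst ≤ μ) (h₂ : ρ.map Prod.snd ≤ μ') :
    ∃ ν : Measure (X × Y), IsCoupling ν μ μ' ∧ ρ ≤ ν := by
  have : IsFiniteMeasure ρ := ⟨by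
    simpa [Measure.map_apply measurable_fst MeasurableSet.univ] using
      (h₁ univ).trans_lt (measure_lt_top μ univ)⟩
  set ξ := μ - ρ.map Prod.fst
  set ξ' := μ' - ρ.map Prod.snd
  have hξ : ξ univ = ξ' univ := by
    simp only [ξ, ξ', Measure.sub_apply .univ h₁, Measure.sub_apply .univ h₂,
      Measure.map_apply measurable_fst .univ, Measure.map_apply measurable_snd .univ,
      preimage_univ, hmass]
  refine ⟨ρ + (ξ univ)⁻¹ • ξ.prod ξ', ⟨?_, ?_⟩, Measure.le_add_right le_rfl⟩
  · rw [Measure.map_add _ _ measurable_fst, Measure.map_smul, Measure.map_fst_prod, ← hξ,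
      inv_measure_univ_smul_smul, add_comm, Measure.sub_add_cancel_of_le h₁]
  · rw [Measure.map_add _ _ measurable_snd, Measure.map_smul, Measure.map_snd_prod, hξ,
      inv_measure_univ_smul_smul, add_comm, Measure.sub_add_cancel_of_le h₂]

theorem isCoupling_prod (μ : Measure X) (μ' : Measure Y) [IsProbabilityMeasure μ]
    [IsProbabilityMeasure μ'] : IsCoupling (μ.prod μ') μ μ' := by
  simp [IsCoupling]

theorem IsCoupling.isProbabilityMeasure {ν : Measure (X × Y)} {μ : Measure X} {μ' : Measure Y}
    [IsProbabilityMeasure μ] (hν : IsCoupling ν μ μ') : IsProbabilityMeasure ν :=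
  ⟨by rw [← preimage_univ (f := Prod.fst), ← Measure.map_apply measurable_fst .univ, hν.1,
    measure_univ]⟩

theorem prob_compl_le_ofReal {ν : Measure X} [IsProbabilityMeasure ν] {R : Set X}
    (hR : MeasurableSet R) {ε : ℝ} (h : ENNReal.ofReal (1 - ε) ≤ ν R) :
    ν Rᶜ ≤ ENNReal.ofReal ε := by
  rw [prob_compl_eq_one_sub hR, tsub_le_iff_right]
  calc 1 = ENNReal.ofReal (ε + (1 - ε)) := by simp
    _ ≤ ENNReal.ofReal ε + ENNReal.ofReal (1 - ε) := ENNReal.ofReal_add_le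
    _ ≤ ENNReal.ofReal ε + ν R := by gcongr

end Coupling

section Distortion

variable {X Y : Type*} [MetricSpace X] [MetricSpace Y]

variable [BoundedSpace X] [BoundedSpace Y] in
theorem abs_dist_sub_dist_le_diam_add_diam (p q : X × Y) :
    |dist p.1 q.1 - dist p.2 q.2| ≤ Metric.diam (univ : Set X) + Metric.diam (univ : Set Y) := by
  have h₁ := Metric.dist_le_diam_of_mem (.all _) (mem_univ p.1) (mem_univ q.1)
  have h₂ := Metric.dist_le_diam_of_mem (.all _) (mem_univ p.2) (mem_univ q.2)
  rw [abs_le]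
  constructor <;> linarith [dist_nonneg (x := p.1) (y := q.1), dist_nonneg (x := p.2) (y := q.2)]

theorem abs_dist_sub_dist_le_distortion [BoundedSpace X] [BoundedSpace Y] {R : Set (X × Y)}
    {p q : X × Y} (hp : p ∈ R) (hq : q ∈ R) : |dist p.1 q.1 - dist p.2 q.2| ≤ distortion R :=
  le_csSup ⟨_, by rintro _ ⟨p, -, q, -, rfl⟩; exact abs_dist_sub_dist_le_diam_add_diam p q⟩
    ⟨p, hp, q, hq, rfl⟩

theorem distortion_le {R : Set (X × Y)} {c : ℝ}
    (h : ∀ p ∈ R, ∀ q ∈ R, |dist p.1 q.1 - dist p.2 q.2| ≤ c) (hc : 0 ≤ c) : distortion R ≤ c :=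
  Real.sSup_le (by rintro _ ⟨p, hp, q, hq, rfl⟩; exact h p hp q hq) hc

end Distortion

/-- The closedness condition on the sets `C` in `glueProkhorovDist`. -/
def IsGlueClosed {X Y : Type*} (δ : X ⊕ Y → X ⊕ Y → ℝ) (C : Set (X ⊕ Y)) : Prop :=
  ∀ a ∉ C, ∃ η > 0, ∀ b ∈ C, η ≤ δ a b

theorem glueHausdorffDist_nonneg {X Y : Type*} {δ : X ⊕ Y → X ⊕ Y → ℝ} :
    0 ≤ glueHausdorffDist δ :=
  Real.sInf_nonneg fun _ h => h.1.le

theorem glueProkhorovDist_nonneg {X Y : Type*} [MeasurableSpace X] [MeasurableSpace Y]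
    {δ : X ⊕ Y → X ⊕ Y → ℝ} {μ : Measure X} {μ' : Measure Y} : 0 ≤ glueProkhorovDist δ μ μ' :=
  Real.sInf_nonneg fun _ h => h.1.le

theorem measure_preimage_inl_le_of_glueProkhorovDist_lt {X Y : Type*} [MeasurableSpace X]
    [MeasurableSpace Y] {δ : X ⊕ Y → X ⊕ Y → ℝ} {μ : Measure X} {μ' : Measure Y}
    [IsFiniteMeasure μ] {r : ℝ}
    (h : glueProkhorovDist δ μ μ' < r) {C : Set (X ⊕ Y)} (hC : IsGlueClosed δ C) :
    μ (Sum.inl ⁻¹' C) ≤ μ' (Sum.inr ⁻¹' {a | ∃ b ∈ C, δ a b < r}) + ENNReal.ofReal r := by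
  refine (mem_of_csInf_lt h ⟨(μ univ).toReal + 1, by positivity, fun C _ => ?_⟩ ?_).2 C hC
  · calc μ (Sum.inl ⁻¹' C) ≤ μ univ := measure_mono (subset_univ _)
      _ ≤ ENNReal.ofReal ((μ univ).toReal + 1) :=
          (ENNReal.le_ofReal_iff_toReal_le (measure_ne_top _ _) (by positivity)).mpr (by linarith)
      _ ≤ _ := le_add_self
  · rintro a ⟨ha, haC⟩ b hab
    refine ⟨ha.trans_le hab, fun C hC => (haC C hC).trans ?_⟩
    gcongr

namespace IsGlueMetric

variable {X Y : Type*} [MetricSpace X] [MetricSpace Y] {δ : X ⊕ Y → X ⊕ Y → ℝ}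

theorem nonneg (hδ : IsGlueMetric δ) (a b : X ⊕ Y) : 0 ≤ δ a b := by
  linarith [hδ.triangle a b a, hδ.refl a, hδ.symm a b]

theorem inl_inr_le (hδ : IsGlueMetric δ) (x x' : X) (y y' : Y) :
    δ (.inl x) (.inr y) ≤ dist x x' + δ (.inl x') (.inr y') + dist y' y := by
  linarith [hδ.triangle (.inl x) (.inl x') (.inr y), hδ.triangle (.inl x') (.inr y') (.inr y),
    hδ.restr_left x x', hδ.restr_right y' y]

theorem abs_dist_sub_dist_le (hδ : IsGlueMetric δ) (x x' : X) (y y' : Y) :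
    |dist x x' - dist y y'| ≤ δ (.inl x) (.inr y) + δ (.inl x') (.inr y') := by
  rw [abs_le]
  constructor
  · linarith [hδ.triangle (.inr y) (.inl x) (.inr y'), hδ.triangle (.inl x) (.inl x') (.inr y'),
      hδ.restr_left x x', hδ.restr_right y y', hδ.symm (.inr y) (.inl x)]
  · linarith [hδ.triangle (.inl x) (.inr y) (.inl x'), hδ.triangle (.inr y) (.inr y') (.inl x'),
      hδ.restr_left x x', hδ.restr_right y y', hδ.symm (.inr y') (.inl x')]

theorem continuous_inl_inr (hδ : IsGlueMetric δ) :
    Continuous fun p : X × Y => δ (.inl p.1) (.inr p.2) := by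
  refine (LipschitzWith.of_le_add_mul 2 fun p q => ?_).continuous
  have h₁ : dist p.1 q.1 ≤ dist p q := le_max_left _ _
  have h₂ : dist p.2 q.2 ≤ dist p q := le_max_right _ _
  push_cast
  linarith [hδ.inl_inr_le p.1 q.1 p.2 q.2, dist_comm q.2 p.2]

theorem continuous_inl (hδ : IsGlueMetric δ) (a : X ⊕ Y) : Continuous fun x => δ a (.inl x) :=
  (LipschitzWith.of_le_add fun x x' => by
    linarith [hδ.triangle a (.inl x') (.inl x), hδ.restr_left x' x, dist_comm x x']).continuous

theorem isClosed_preimage_inl (hδ : IsGlueMetric δ) {C : Set (X ⊕ Y)} (hC : IsGlueClosed δ C) :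
    IsClosed (Sum.inl ⁻¹' C : Set X) := by
  refine isOpen_compl_iff.mp (Metric.isOpen_iff.mpr fun x hx => ?_)
  obtain ⟨η, hη, hηC⟩ := hC (.inl x) hx
  refine ⟨η, hη, fun x' hx' hx'C => ?_⟩
  have := hηC _ hx'C
  rw [hδ.restr_left, dist_comm] at this
  exact (Metric.mem_ball.mp hx').not_ge this

theorem isGlueClosed_image_inl (hδ : IsGlueMetric δ) {K : Set X} (hK : IsCompact K) :
    IsGlueClosed δ (Sum.inl '' K) := by
  intro a ha
  obtain ⟨η, hη, hηK⟩ := hK.exists_forall_le' (hδ.continuous_inl a).continuousOn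
    fun x hx => hδ.pos _ _ fun h => ha ⟨x, hx, h.symm⟩
  exact ⟨η, hη, by simpa using hηK⟩

end IsGlueMetric

section GlueBounds

variable {X Y : Type*} {δ : X ⊕ Y → X ⊕ Y → ℝ}

theorem glueHausdorffDist_le_of_isCorrespondence {R : Set (X × Y)} (hR : IsCorrespondence R)
    {ε : ℝ} (hε : 0 ≤ ε) (h : ∀ p ∈ R, δ (.inl p.1) (.inr p.2) ≤ ε) :
    glueHausdorffDist δ ≤ ε := by
  refine csInf_le_of_Ioi_subset (fun ε' hε' => ⟨hε.trans_lt hε', fun x => ?_, fun y => ?_⟩)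
    ⟨0, fun _ h => h.1.le⟩
  · obtain ⟨y, hxy⟩ := hR.1 x
    exact ⟨y, (h _ hxy).trans_lt hε'⟩
  · obtain ⟨x, hxy⟩ := hR.2 y
    exact ⟨x, (h _ hxy).trans_lt hε'⟩

variable [MetricSpace X] [MetricSpace Y]

theorem isGlueMetric_glueDist {Z : Type*} [Nonempty Z] {Φ : Z → X} {Ψ : Z → Y} {ε : ℝ}
    (hε : 0 < ε) (H : ∀ p q, |dist (Φ p) (Φ q) - dist (Ψ p) (Ψ q)| ≤ 2 * ε) :
    IsGlueMetric (Metric.glueDist Φ Ψ ε) := by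
  let := Metric.glueMetricApprox Φ Ψ ε hε H
  exact ⟨dist_self, fun _ _ => dist_pos.2, dist_comm, dist_triangle, fun _ _ => rfl,
    fun _ _ => rfl⟩

theorem glueProkhorovDist_le_of_isCoupling [MeasurableSpace X] [OpensMeasurableSpace X]
    [MeasurableSpace Y] (hδ : IsGlueMetric δ) {μ : Measure X} {μ' : Measure Y}
    {ν : Measure (X × Y)} (hν : IsCoupling ν μ μ') {R : Set (X × Y)} {ε : ℝ} (hε : 0 ≤ ε)
    (h : ∀ p ∈ R, δ (.inl p.1) (.inr p.2) ≤ ε) (hRc : ν Rᶜ ≤ ENNReal.ofReal ε) :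
    glueProkhorovDist δ μ μ' ≤ ε := by
  refine csInf_le_of_Ioi_subset (fun ε' hε' => ⟨hε.trans_lt hε', fun C hC => ?_⟩)
    ⟨0, fun _ h => h.1.le⟩
  set s := Prod.fst ⁻¹' (Sum.inl ⁻¹' C : Set X)
  calc μ (Sum.inl ⁻¹' C) = ν s := by
        rw [← hν.1, Measure.map_apply measurable_fst (hδ.isClosed_preimage_inl hC).measurableSet]
    _ ≤ ν (s ∩ R) + ν (s \ R) := measure_le_inter_add_sdiff _ _ _
    _ ≤ ν (Prod.snd ⁻¹' (Sum.inr ⁻¹' {a | ∃ b ∈ C, δ a b < ε'})) + ν Rᶜ := by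
        gcongr
        · rintro ⟨x, y⟩ ⟨hx, hxy⟩
          exact ⟨.inl x, hx, (hδ.symm _ _).trans_lt ((h _ hxy).trans_lt hε')⟩
        · exact sdiff_subset_compl _ _
    _ ≤ μ' (Sum.inr ⁻¹' {a | ∃ b ∈ C, δ a b < ε'}) + ENNReal.ofReal ε' := by
        gcongr
        · rw [← hν.2]
          exact Measure.le_map_apply measurable_snd.aemeasurable _
        · exact hRc.trans (ENNReal.ofReal_le_ofReal hε'.le)

theorem exists_isGlueMetric_of_isCoupling [Nonempty X] [MeasurableSpace X]
    [OpensMeasurableSpace X] [MeasurableSpace Y] {μ : Measure X} {μ' : Measure Y} {ε : ℝ}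
    (hε : 0 < ε) {ν : Measure (X × Y)} (hν : IsCoupling ν μ μ') {R : Set (X × Y)}
    (hR : IsCorrespondence R) (hRc : ν Rᶜ ≤ ENNReal.ofReal ε)
    (hdis : ∀ p ∈ R, ∀ q ∈ R, |dist p.1 q.1 - dist p.2 q.2| ≤ 2 * ε) :
    ∃ δ, IsGlueMetric δ ∧ max (glueHausdorffDist δ) (glueProkhorovDist δ μ μ') ≤ ε := by
  have : Nonempty R := let ⟨_, h⟩ := hR.1 (Classical.arbitrary X); ⟨⟨_, h⟩⟩
  have hδ := isGlueMetric_glueDist (Φ := fun p : R => p.1.1) (Ψ := fun p : R => p.1.2) hε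
    fun p q => hdis p p.2 q q.2
  have hδR : ∀ p ∈ R, Metric.glueDist (fun p : R => p.1.1) (fun p : R => p.1.2) ε
      (.inl p.1) (.inr p.2) ≤ ε := fun p hp =>
    (Metric.glueDist_glued_points (fun p : R => p.1.1) (fun p : R => p.1.2) ε ⟨p, hp⟩).le
  exact ⟨_, hδ, max_le (glueHausdorffDist_le_of_isCorrespondence hR hε.le hδR)
    (glueProkhorovDist_le_of_isCoupling hδ hν hε.le hδR hRc)⟩

end GlueBounds

namespace IsGlueMetric

variable {X Y : Type*} [MetricSpace X] [MetricSpace Y] {δ : X ⊕ Y → X ⊕ Y → ℝ}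

theorem forall_exists_lt_of_glueHausdorffDist_lt [CompactSpace X] [CompactSpace Y] [Nonempty X]
    [Nonempty Y] (hδ : IsGlueMetric δ) {r : ℝ} (h : glueHausdorffDist δ < r) :
    (∀ x : X, ∃ y : Y, δ (.inl x) (.inr y) < r) ∧ (∀ y : Y, ∃ x : X, δ (.inl x) (.inr y) < r) := by
  obtain ⟨M, hM⟩ := (isCompact_univ.image hδ.continuous_inl_inr).bddAbove
  have hM' : ∀ x y, δ (.inl x) (.inr y) ≤ M := fun x y => hM ⟨(x, y), mem_univ _, rfl⟩
  obtain ⟨x₀⟩ := ‹Nonempty X›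
  obtain ⟨y₀⟩ := ‹Nonempty Y›
  have hM0 : 0 ≤ M := (hδ.nonneg _ _).trans (hM' x₀ y₀)
  refine (mem_of_csInf_lt h ⟨M + 1, by linarith, fun x => ⟨y₀, by linarith [hM' x y₀]⟩,
    fun y => ⟨x₀, by linarith [hM' x₀ y]⟩⟩ ?_).2
  rintro a ⟨ha, hx, hy⟩ b hab
  exact ⟨ha.trans_le hab, fun x => (hx x).imp fun _ h => h.trans_le hab,
    fun y => (hy y).imp fun _ h => h.trans_le hab⟩

/-- The Hall condition, with defect `r`, for the cells of partitions of mesh `θ`. -/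
theorem sum_measure_le_of_glueProkhorovDist_lt [CompactSpace X] [MeasurableSpace X]
    [MeasurableSpace Y] (hδ : IsGlueMetric δ) {μ : Measure X} {μ' : Measure Y} [IsFiniteMeasure μ]
    {r θ : ℝ} (h : glueProkhorovDist δ μ μ' < r) {ι κ : Type*} [Fintype κ] {x : ι → X}
    {y : κ → Y} {A : ι → Set X} {B : κ → Set Y} (hA : ∀ i, MeasurableSet (A i))
    (hAd : Pairwise (Function.onFun Disjoint A)) (hAx : ∀ i, A i ⊆ Metric.closedBall (x i) θ)
    (hBy : ∀ j, B j ⊆ Metric.ball (y j) θ) (hB : ⋃ j, B j = univ) (I : Finset ι) :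
    ∑ i ∈ I, μ (A i) ≤ ∑ j ∈ relImageFinset (fun i j => δ (.inl (x i)) (.inr (y j)) ≤ r + 2 * θ) I,
      μ' (B j) + ENNReal.ofReal r := by
  set K := ⋃ i ∈ I, Metric.closedBall (x i) θ
  have hK : IsCompact K := I.isCompact_biUnion fun i _ => Metric.isClosed_closedBall.isCompact
  have hKB : Sum.inr ⁻¹' {a | ∃ b ∈ Sum.inl '' K, δ a b < r} ⊆
      ⋃ j ∈ relImageFinset (fun i j => δ (.inl (x i)) (.inr (y j)) ≤ r + 2 * θ) I, B j := by
    rintro y' ⟨_, ⟨x', hx'K, rfl⟩, hlt⟩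
    obtain ⟨i, hi, hx'i⟩ := mem_iUnion₂.mp hx'K
    obtain ⟨j, hj⟩ := mem_iUnion.mp (hB ▸ mem_univ y')
    refine mem_iUnion₂.mpr ⟨j, mem_relImageFinset.mpr ⟨i, hi, ?_⟩, hj⟩
    linarith [hδ.inl_inr_le (x i) x' (y j) y', hδ.symm (.inr y') (.inl x'),
      dist_comm (x i) x', Metric.mem_closedBall.mp hx'i, Metric.mem_ball.mp (hBy j hj)]
  calc ∑ i ∈ I, μ (A i) = μ (⋃ i ∈ I, A i) :=
        (measure_biUnion_finset (fun i _ j _ hij => hAd hij) fun i _ => hA i).symm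
    _ ≤ μ (Sum.inl ⁻¹' (Sum.inl '' K)) := by
        rw [preimage_image_eq _ Sum.inl_injective]
        exact measure_mono (iUnion₂_mono fun i _ => hAx i)
    _ ≤ μ' (Sum.inr ⁻¹' {a | ∃ b ∈ Sum.inl '' K, δ a b < r}) + ENNReal.ofReal r :=
        _root_.measure_preimage_inl_le_of_glueProkhorovDist_lt h (hδ.isGlueClosed_image_inl hK)
    _ ≤ _ := by
        gcongr
        exact (measure_mono hKB).trans (measure_biUnion_finset_le _ _)

theorem exists_subcoupling_of_glueProkhorovDist_lt [CompactSpace X] [CompactSpace Y]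
    [MeasurableSpace X] [OpensMeasurableSpace X] [MeasurableSpace Y] [OpensMeasurableSpace Y]
    (hδ : IsGlueMetric δ) {μ : Measure X} {μ' : Measure Y} [IsProbabilityMeasure μ]
    [IsFiniteMeasure μ'] {r θ : ℝ} (h : glueProkhorovDist δ μ μ' < r) (hθ : 0 < θ) :
    ∃ ρ : Measure (X × Y), ρ.map Prod.fst ≤ μ ∧ ρ.map Prod.snd ≤ μ' ∧
      ENNReal.ofReal (1 - (r + θ)) ≤ ρ {p | δ (.inl p.1) (.inr p.2) ≤ r + 4 * θ} := by
  have hr : 0 ≤ r := glueProkhorovDist_nonneg.trans h.le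
  obtain ⟨n, x, A, hA, hAx, hAd, hAcov⟩ := exists_measurable_partition_subset_ball (Z := X) hθ
  obtain ⟨n', y, B, hB, hBy, hBd, hBcov⟩ := exists_measurable_partition_subset_ball (Z := Y) hθ
  have hall I : ∑ i ∈ I, (μ (A i)).toReal ≤
      ∑ j ∈ relImageFinset (fun i j => δ (.inl (x i)) (.inr (y j)) ≤ r + 2 * θ) I,
        (μ' (B j)).toReal + r := by
    have hfin : ∑ j ∈ relImageFinset (fun i j => δ (.inl (x i)) (.inr (y j)) ≤ r + 2 * θ) I,
        μ' (B j) ≠ ⊤ := ENNReal.sum_ne_top.2 fun _ _ => measure_ne_top _ _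
    have := ENNReal.toReal_mono (ENNReal.add_ne_top.2 ⟨hfin, ENNReal.ofReal_ne_top⟩) <|
      hδ.sum_measure_le_of_glueProkhorovDist_lt h hA hAd
        (fun i => (hAx i).trans Metric.ball_subset_closedBall) hBy hBcov I
    rwa [ENNReal.toReal_add hfin ENNReal.ofReal_ne_top, ENNReal.toReal_ofReal hr,
      ENNReal.toReal_sum fun _ _ => measure_ne_top _ _,
      ENNReal.toReal_sum fun _ _ => measure_ne_top _ _] at this
  obtain ⟨m, hm0, hrow, hcol, hS, hmass⟩ := exists_transport_of_hall_defect _ _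
    (fun _ => ENNReal.toReal_nonneg) (fun _ => ENNReal.toReal_nonneg) _ hall hθ
  have hμA : ∑ i, (μ (A i)).toReal = 1 := by
    rw [← ENNReal.toReal_sum fun _ _ => measure_ne_top _ _, ← ENNReal.toReal_one,
      ← measure_univ (μ := μ), ← hAcov, measure_iUnion hAd hA, tsum_fintype]
  have hrow' i : ∑ j, ENNReal.ofReal (m i j) ≤ μ (A i) := by
    rw [← ENNReal.ofReal_sum_of_nonneg fun j _ => hm0 i j]
    exact ENNReal.ofReal_le_of_le_toReal (hrow i)
  have hcol' j : ∑ i, ENNReal.ofReal (m i j) ≤ μ' (B j) := by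
    rw [← ENNReal.ofReal_sum_of_nonneg fun i _ => hm0 i j]
    exact ENNReal.ofReal_le_of_le_toReal (hcol j)
  have hsupp i j (hij : ENNReal.ofReal (m i j) ≠ 0) :
      A i ×ˢ B j ⊆ {p | δ (.inl p.1) (.inr p.2) ≤ r + 4 * θ} := by
    rintro ⟨x', y'⟩ ⟨hx', hy'⟩
    show δ (.inl x') (.inr y') ≤ r + 4 * θ
    have hSij := hS i j fun h => hij (by simp [h])
    linarith [hδ.inl_inr_le x' (x i) y' (y j), Metric.mem_ball.mp (hAx i hx'),
      Metric.mem_ball'.mp (hBy j hy')]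
  obtain ⟨ρ, h₁, h₂, hρ⟩ := exists_subcoupling_of_transport μ μ' hA hB hAd hBd _ hrow' hcol' hsupp
  refine ⟨ρ, h₁, h₂, le_trans ?_ hρ⟩
  calc ENNReal.ofReal (1 - (r + θ)) ≤ ENNReal.ofReal (∑ i, ∑ j, m i j) :=
        ENNReal.ofReal_le_ofReal (by linarith)
    _ = ∑ i, ∑ j, ENNReal.ofReal (m i j) := by
        rw [ENNReal.ofReal_sum_of_nonneg fun i _ => Finset.sum_nonneg fun j _ => hm0 i j]
        simp only [ENNReal.ofReal_sum_of_nonneg fun j _ => hm0 _ j]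

theorem distortion_setOf_le (hδ : IsGlueMetric δ) {t : ℝ} (ht : 0 ≤ t) :
    distortion {p : X × Y | δ (.inl p.1) (.inr p.2) ≤ t} ≤ 2 * t :=
  distortion_le (fun _ hp _ hq => (hδ.abs_dist_sub_dist_le _ _ _ _).trans <| by
    rw [two_mul]; exact add_le_add hp hq) (by linarith)

theorem exists_isCoupling_isCorrespondence_of_lt [CompactSpace X] [CompactSpace Y] [Nonempty X]
    [Nonempty Y] [MeasurableSpace X] [OpensMeasurableSpace X] [MeasurableSpace Y]
    [OpensMeasurableSpace Y]
    (hδ : IsGlueMetric δ) {μ : Measure X} {μ' : Measure Y} [IsProbabilityMeasure μ]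
    [IsProbabilityMeasure μ'] {t : ℝ}
    (ht : max (glueHausdorffDist δ) (glueProkhorovDist δ μ μ') < t) :
    0 < t ∧ ∃ ν : Measure (X × Y), IsCoupling ν μ μ' ∧
      ∃ R : Set (X × Y), IsCompact R ∧ IsCorrespondence R ∧
        ENNReal.ofReal (1 - t) ≤ ν R ∧ distortion R / 2 ≤ t := by
  obtain ⟨r, hr, hrt⟩ := exists_between ht
  rw [max_lt_iff] at hr
  have ht0 : 0 < t := (glueHausdorffDist_nonneg.trans_lt hr.1).trans hrt
  obtain ⟨hx, hy⟩ := hδ.forall_exists_lt_of_glueHausdorffDist_lt hr.1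
  obtain ⟨ρ, h₁, h₂, hρ⟩ := hδ.exists_subcoupling_of_glueProkhorovDist_lt hr.2
    (θ := (t - r) / 4) (by linarith)
  obtain ⟨ν, hν, hρν⟩ := exists_isCoupling_ge μ μ' (by simp) h₁ h₂
  rw [show r + 4 * ((t - r) / 4) = t by ring] at hρ
  refine ⟨ht0, ν, hν, _, (isClosed_le hδ.continuous_inl_inr continuous_const).isCompact,
    ⟨fun x => (hx x).imp fun _ h => (h.trans hrt).le,
      fun y => (hy y).imp fun _ h => (h.trans hrt).le⟩,
    ?_, by linarith [hδ.distortion_setOf_le ht0.le]⟩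
  calc ENNReal.ofReal (1 - t) ≤ ENNReal.ofReal (1 - (r + (t - r) / 4)) :=
        ENNReal.ofReal_le_ofReal (by linarith)
    _ ≤ ν _ := hρ.trans (hρν _)

end IsGlueMetric

theorem ghpDist_eq_inf_coupling_correspondence_general
    {X Y : Type*} [MetricSpace X] [MetricSpace Y]
    [CompactSpace X] [CompactSpace Y]
    [MeasurableSpace X] [BorelSpace X] [MeasurableSpace Y] [BorelSpace Y]
    (μ : Measure X) (μ' : Measure Y)
    [IsProbabilityMeasure μ] [IsProbabilityMeasure μ'] :
    ghpDist μ μ' =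
      sInf {ε : ℝ | 0 < ε ∧ ∃ ν : Measure (X × Y), IsCoupling ν μ μ' ∧
        ∃ R : Set (X × Y), IsCompact R ∧ IsCorrespondence R ∧
          ENNReal.ofReal (1 - ε) ≤ ν R ∧ distortion R / 2 ≤ ε} := by
  have := nonempty_of_isProbabilityMeasure μ
  have := nonempty_of_isProbabilityMeasure μ'
  refine csInf_eq_csInf_of_forall_exists_le_of_Ioi_subset ?_ ⟨0, ?_⟩ ⟨0, fun _ h => h.1.le⟩ ?_ ?_
  · set D := Metric.diam (univ : Set X) + Metric.diam (univ : Set Y)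
    have hD : 0 ≤ D := add_nonneg Metric.diam_nonneg Metric.diam_nonneg
    refine ⟨D + 1, by linarith, μ.prod μ', isCoupling_prod μ μ', univ, isCompact_univ,
      ⟨fun _ => ⟨Classical.arbitrary Y, trivial⟩, fun _ => ⟨Classical.arbitrary X, trivial⟩⟩,
      by simp; linarith, ?_⟩
    linarith [distortion_le (R := univ) (fun p _ q _ => abs_dist_sub_dist_le_diam_add_diam p q) hD]
  · rintro _ ⟨δ, -, rfl⟩
    exact glueHausdorffDist_nonneg.trans (le_max_left _ _)
  · rintro ε ⟨hε, ν, hν, R, hRc, hR, hνR, hdis⟩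
    have := hν.isProbabilityMeasure
    obtain ⟨δ, hδ, hle⟩ := exists_isGlueMetric_of_isCoupling hε hν hR
      (prob_compl_le_ofReal hRc.isClosed.measurableSet hνR)
      fun p hp q hq => by linarith [abs_dist_sub_dist_le_distortion hp hq]
    exact ⟨_, ⟨δ, hδ, rfl⟩, hle⟩
  · rintro _ ⟨δ, hδ, rfl⟩ t ht
    exact hδ.exists_isCoupling_isCorrespondence_of_lt ht

/-- Characterization of the Gromov–Hausdorff–Prokhorov distance via couplings and
compact correspondences. -/
theorem ghpDist_eq_inf_coupling_correspondence
    {X Y : Type*} [MetricSpace X] [MetricSpace Y]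
    [CompactSpace X] [CompactSpace Y] [Nonempty X] [Nonempty Y]
    [MeasurableSpace X] [BorelSpace X] [MeasurableSpace Y] [BorelSpace Y]
    (μ : Measure X) (μ' : Measure Y)
    [IsProbabilityMeasure μ] [IsProbabilityMeasure μ'] :
    ghpDist μ μ' =
      sInf {ε : ℝ | 0 < ε ∧ ∃ ν : Measure (X × Y), IsCoupling ν μ μ' ∧
        ∃ R : Set (X × Y), IsCompact R ∧ IsCorrespondence R ∧
          ENNReal.ofReal (1 - ε) ≤ ν R ∧ distortion R / 2 ≤ ε} :=
  ghpDist_eq_inf_coupling_correspondence_general μ μ'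
end

section
/- Let (X_n, d_n, μ_n), n ≥ 1, be nonempty compact metric spaces with Borel probability measures converging to (X, d, μ) in the Gromov–Hausdorff–Prokhorov distance, i.e. d_GHP((X_n,d_n,μ_n),(X,d,μ)) → 0. If lim_{ε↓0} liminf_{n→∞} ∫_{X_n} μ_n(B(x,ε)) μ_n(dx) = 0, where B(x,ε) is the open ball of radius ε around x, then μ is a diffuse measure (μ has no atoms: μ({x}) = 0 for every x ∈ X). -/
open MeasureTheory Set

/-!
If `ν` had an atom of mass `c > 0` at `y`, then for GHP-close `(X_n, μ_n)` a glue metric with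
Prokhorov distance `r < c/2` moves at least `c - r ≥ c/2` of the mass of `μ_n` into the
`r`-neighbourhood `A` of `y`. This set has diameter `< 2r`, so every point of `A` sees all of `A`
in its `2r`-ball, and `∫ μ_n(B(x, 2r)) dμ_n ≥ μ_n(A)² ≥ c²/4` uniformly in `n`, contradicting the
hypothesis on the liminf as `r → 0`.
-/

open scoped ENNReal
open Filter

section GlueMetric

variable {X Y : Type*} [MetricSpace X] [MetricSpace Y]

theorem isGlueMetric_sumDist : IsGlueMetric (X := X) (Y := Y) Metric.Sum.dist := by
  let _ : MetricSpace (X ⊕ Y) := Metric.metricSpaceSum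
  exact ⟨dist_self, fun _ _ => dist_pos.2, dist_comm, dist_triangle,
    fun _ _ => rfl, fun _ _ => rfl⟩

theorem IsGlueMetric.continuous_inl_s9 {δ : X ⊕ Y → X ⊕ Y → ℝ} (hδ : IsGlueMetric δ)
    (b : X ⊕ Y) : Continuous fun x : X => δ (.inl x) b := by
  refine (LipschitzWith.of_dist_le_mul (K := 1) fun x x' => ?_).continuous
  have h₁ := hδ.triangle (.inl x) (.inl x') b
  have h₂ := hδ.triangle (.inl x') (.inl x) b
  rw [hδ.restr_left] at h₁ h₂
  rw [NNReal.coe_one, one_mul, Real.dist_eq, abs_sub_le_iff]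
  constructor <;> linarith [dist_comm x x']

theorem exists_isGlueMetric_glueProkhorovDist_lt [MeasurableSpace X] [MeasurableSpace Y]
    {μ : Measure X} {ν : Measure Y} {r : ℝ} (h : ghpDist μ ν < r) :
    ∃ δ : X ⊕ Y → X ⊕ Y → ℝ, IsGlueMetric δ ∧ glueProkhorovDist δ μ ν < r := by
  obtain ⟨_, ⟨δ, hδ, rfl⟩, hlt⟩ :=
    exists_lt_of_csInf_lt (by exact ⟨_, _, isGlueMetric_sumDist, rfl⟩) h
  exact ⟨δ, hδ, (le_max_right _ _).trans_lt hlt⟩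

end GlueMetric

theorem measure_le_glue_thickening_add_of_glueProkhorovDist_lt {X Y : Type*}
    [MeasurableSpace X] [MeasurableSpace Y] {δ : X ⊕ Y → X ⊕ Y → ℝ}
    {μ : Measure X} [IsProbabilityMeasure μ] {ν : Measure Y} {r : ℝ}
    (h : glueProkhorovDist δ μ ν < r) {C : Set (X ⊕ Y)}
    (hC : ∀ a ∉ C, ∃ η > 0, ∀ b ∈ C, η ≤ δ a b) :
    μ (.inl ⁻¹' C) ≤ ν (.inr ⁻¹' {a | ∃ b ∈ C, δ a b < r}) + ENNReal.ofReal r := by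
  -- `sInf ∅ = 0`, so nonemptiness is needed; `ε = 2` is admissible since `μ` has mass `1`
  have hne : Set.Nonempty {ε : ℝ | 0 < ε ∧ ∀ C : Set (X ⊕ Y),
      (∀ a ∉ C, ∃ η > 0, ∀ b ∈ C, η ≤ δ a b) →
      μ (.inl ⁻¹' C) ≤ ν (.inr ⁻¹' {a | ∃ b ∈ C, δ a b < ε}) + ENNReal.ofReal ε} :=
    ⟨2, two_pos, fun _ _ => prob_le_one.trans <| by simp [le_add_left]⟩
  obtain ⟨ε, ⟨-, hε⟩, hεr⟩ := exists_lt_of_csInf_lt hne h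
  refine (hε C hC).trans (add_le_add (measure_mono fun y ⟨b, hb, hyb⟩ => ⟨b, hb, ?_⟩)
    (ENNReal.ofReal_le_ofReal hεr.le))
  exact hyb.trans hεr

theorem sq_measure_le_lintegral_measure_ball {X : Type*} [PseudoMetricSpace X]
    [MeasurableSpace X] (μ : Measure X) {A : Set X} (hA : MeasurableSet A) {ε : ℝ}
    (hdist : ∀ x ∈ A, ∀ x' ∈ A, dist x' x < ε) :
    μ A ^ 2 ≤ ∫⁻ x, μ (Metric.ball x ε) ∂μ :=
  calc μ A ^ 2 = ∫⁻ _ in A, μ A ∂μ := by rw [setLIntegral_const, sq]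
    _ ≤ ∫⁻ x in A, μ (Metric.ball x ε) ∂μ :=
      setLIntegral_mono' hA fun x hx => measure_mono fun x' hx' => hdist x hx x' hx'
    _ ≤ ∫⁻ x, μ (Metric.ball x ε) ∂μ := setLIntegral_le_lintegral _ _

section Atom

variable {X Y : Type*} [MetricSpace X] [MetricSpace Y]
  [MeasurableSpace X] [BorelSpace X] [MeasurableSpace Y] [BorelSpace Y]
  {μ : Measure X} [IsProbabilityMeasure μ] {ν : Measure Y} [IsProbabilityMeasure ν]

theorem IsGlueMetric.measure_singleton_le {δ : X ⊕ Y → X ⊕ Y → ℝ} (hδ : IsGlueMetric δ)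
    {r : ℝ} (h : glueProkhorovDist δ μ ν < r) (y : Y) :
    ν {y} ≤ μ {x | δ (.inl x) (.inr y) < r} + ENNReal.ofReal r := by
  set A := {x | δ (.inl x) (.inr y) < r}
  have hsep : ∀ a ∉ {a | r ≤ δ a (.inr y)}, ∃ η > 0, ∀ b ∈ {a | r ≤ δ a (.inr y)}, η ≤ δ a b :=
    fun a ha => ⟨r - δ a (.inr y), by simpa using ha, fun b hb => by
      linarith [hδ.triangle b a (.inr y), hδ.symm a b, show r ≤ δ b (.inr y) from hb]⟩
  have hcompl : μ Aᶜ ≤ ν {y}ᶜ + ENNReal.ofReal r := by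
    refine le_of_eq_of_le (by congr 1; ext; simp [A]) <|
      (measure_le_glue_thickening_add_of_glueProkhorovDist_lt h hsep).trans ?_
    gcongr
    rintro _ ⟨b, hb, hlt⟩ hy
    rw [mem_singleton_iff.1 hy] at hlt
    linarith [hδ.symm (.inr y) b, show r ≤ δ b (.inr y) from hb]
  have hA : MeasurableSet A := (isOpen_lt (hδ.continuous_inl_s9 _) continuous_const).measurableSet
  have htotal : ν {y} + ν {y}ᶜ ≤ μ A + ENNReal.ofReal r + ν {y}ᶜ :=
    calc ν {y} + ν {y}ᶜ = μ A + μ Aᶜ := by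
          rw [measure_add_measure_compl (measurableSet_singleton y), measure_add_measure_compl hA,
            measure_univ, measure_univ]
      _ ≤ μ A + ENNReal.ofReal r + ν {y}ᶜ := by rw [add_right_comm, add_assoc]; gcongr
  exact (ENNReal.add_le_add_iff_right (measure_ne_top ν _)).1 htotal

theorem sq_sub_le_lintegral_measure_ball_of_ghpDist_lt {r : ℝ} (hr : ghpDist μ ν < r) (y : Y) :
    (ν {y} - ENNReal.ofReal r) ^ 2 ≤ ∫⁻ x, μ (Metric.ball x (2 * r)) ∂μ := by
  obtain ⟨δ, hδ, hP⟩ := exists_isGlueMetric_glueProkhorovDist_lt hr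
  set A := {x | δ (.inl x) (.inr y) < r}
  have hdiam : ∀ x ∈ A, ∀ x' ∈ A, dist x' x < 2 * r := fun x hx x' hx' => by
    have := hδ.triangle (.inl x') (.inr y) (.inl x)
    rw [hδ.restr_left, hδ.symm (.inr y)] at this
    linarith [show δ (.inl x) (.inr y) < r from hx, show δ (.inl x') (.inr y) < r from hx']
  have hA : MeasurableSet A := (isOpen_lt (hδ.continuous_inl_s9 _) continuous_const).measurableSet
  calc (ν {y} - ENNReal.ofReal r) ^ 2 ≤ μ A ^ 2 := by
        gcongr; exact tsub_le_iff_right.2 (hδ.measure_singleton_le hP y)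
    _ ≤ _ := sq_measure_le_lintegral_measure_ball μ hA hdiam

end Atom

theorem sq_half_measure_singleton_le_liminf_lintegral_measure_ball {X : ℕ → Type*}
    [∀ n, MetricSpace (X n)] [∀ n, MeasurableSpace (X n)] [∀ n, BorelSpace (X n)]
    {μ : ∀ n, Measure (X n)} [∀ n, IsProbabilityMeasure (μ n)] {Y : Type*} [MetricSpace Y]
    [MeasurableSpace Y] [BorelSpace Y] {ν : Measure Y} [IsProbabilityMeasure ν]
    (hconv : Tendsto (fun n => ghpDist (μ n) ν) atTop (nhds 0)) (y : Y) {ε : ℝ} (hε : 0 < ε) :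
    (ν {y} / 2) ^ 2 ≤ liminf (fun n => ∫⁻ x, μ n (Metric.ball x ε) ∂μ n) atTop := by
  rcases eq_or_ne (ν {y}) 0 with hy | hy
  · simp [hy]
  have hfin : ν {y} / 2 ≠ ∞ := ne_top_of_le_ne_top (measure_ne_top ν {y}) ENNReal.half_le_self
  set r := min (ε / 2) (ν {y} / 2).toReal
  have hr : 0 < r := lt_min (half_pos hε) (ENNReal.toReal_pos (ENNReal.half_pos hy).ne' hfin)
  have hhalf : ν {y} / 2 ≤ ν {y} - ENNReal.ofReal r := by
    rw [← ENNReal.sub_half (measure_ne_top ν {y})]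
    gcongr
    exact (ENNReal.ofReal_le_ofReal (min_le_right _ _)).trans_eq (ENNReal.ofReal_toReal hfin)
  refine le_liminf_of_le (by isBoundedDefault) ?_
  filter_upwards [hconv.eventually_lt_const hr] with n hn
  calc (ν {y} / 2) ^ 2 ≤ (ν {y} - ENNReal.ofReal r) ^ 2 := by gcongr
    _ ≤ ∫⁻ x, μ n (Metric.ball x (2 * r)) ∂μ n := sq_sub_le_lintegral_measure_ball_of_ghpDist_lt hn y
    _ ≤ ∫⁻ x, μ n (Metric.ball x ε) ∂μ n := lintegral_mono fun x => measure_mono <|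
      Metric.ball_subset_ball (by linarith [min_le_left (ε / 2) (ν {y} / 2).toReal])

theorem limit_measure_diffuse_general
    (X : ℕ → Type*) [∀ n, MetricSpace (X n)]
    [∀ n, MeasurableSpace (X n)] [∀ n, BorelSpace (X n)]
    (μ : ∀ n, Measure (X n)) [∀ n, IsProbabilityMeasure (μ n)]
    (Y : Type*) [MetricSpace Y]
    [MeasurableSpace Y] [BorelSpace Y]
    (ν : Measure Y) [IsProbabilityMeasure ν]
    (hconv : Tendsto (fun n => ghpDist (μ n) ν) atTop (nhds 0))
    (hsmall : Tendsto
      (fun ε : ℝ => liminf (fun n => ∫⁻ x, μ n (Metric.ball x ε) ∂ μ n) atTop)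
      (nhdsWithin 0 (Set.Ioi 0)) (nhds 0)) :
    ∀ y : Y, ν {y} = 0 := by
  intro y
  have h : (ν {y} / 2) ^ 2 ≤ 0 := ge_of_tendsto hsmall <| eventually_nhdsWithin_of_forall
    fun ε hε => sq_half_measure_singleton_le_liminf_lintegral_measure_ball hconv y hε
  simpa using h

/-- If compact metric measure spaces `(X_n, d_n, μ_n)` converge to `(Y, d, ν)` in the
Gromov–Hausdorff–Prokhorov distance and
`lim_{ε↓0} liminf_n ∫_{X_n} μ_n(B(x,ε)) μ_n(dx) = 0`, then `ν` is diffuse. -/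
theorem limit_measure_diffuse
    (X : ℕ → Type*) [∀ n, MetricSpace (X n)] [∀ n, CompactSpace (X n)]
    [∀ n, Nonempty (X n)] [∀ n, MeasurableSpace (X n)] [∀ n, BorelSpace (X n)]
    (μ : ∀ n, Measure (X n)) [∀ n, IsProbabilityMeasure (μ n)]
    (Y : Type*) [MetricSpace Y] [CompactSpace Y] [Nonempty Y]
    [MeasurableSpace Y] [BorelSpace Y]
    (ν : Measure Y) [IsProbabilityMeasure ν]
    (hconv : Tendsto (fun n => ghpDist (μ n) ν) atTop (nhds 0))
    (hsmall : Tendsto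
      (fun ε : ℝ => liminf (fun n => ∫⁻ x, μ n (Metric.ball x ε) ∂ μ n) atTop)
      (nhdsWithin 0 (Set.Ioi 0)) (nhds 0)) :
    ∀ y : Y, ν {y} = 0 :=
  limit_measure_diffuse_general X μ Y ν hconv hsmall
end
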